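/- Let H be a complex inner product space, ψ : [0,1] → H a differentiable path of unit vectors with ⟨ψ(0), ψ(1)⟩ ≠ 0, and let s : [0,1] → [0,1] be a differentiable, monotonically increasing function with s(0) = 0 and s(1) = 1. Then the reparametrized path ψ∘s has the same geometric phase as ψ: φ_geo(ψ∘s) = φ_geo(ψ). -/

import Mathlib

open Set MeasureTheory intervalIntegral Filter Topology

-- nonnegativity of the derivative of a monotone function
lemma deriv_nonneg_of_monotoneOn {s s' : ℝ → ℝ}
    (hs : ∀ t ∈ Set.Icc (0:ℝ) 1, HasDerivWithinAt s (s' t) (Set.Icc 0 1) t)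
    (hmono : MonotoneOn s (Set.Icc 0 1)) :
    ∀ t ∈ Set.Icc (0:ℝ) 1, 0 ≤ s' t := by
  intro t ht
  have h := (hs t ht)
  rw [hasDerivWithinAt_iff_tendsto_slope] at h
  rcases lt_or_eq_of_le ht.2 with h1 | h1
  · have hsub : Ioc t 1 ⊆ Icc (0:ℝ) 1 \ {t} := fun z hz =>
      ⟨⟨ht.1.trans hz.1.le, hz.2⟩, ne_of_gt hz.1⟩
    have hne : (𝓝[Ioc t 1] t).NeBot := by
      rw [nhdsWithin_Ioc_eq_nhdsGT h1]; infer_instance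
    have h' := h.mono_left (nhdsWithin_mono t hsub)
    refine ge_of_tendsto h' ?_
    filter_upwards [self_mem_nhdsWithin] with z hz
    have hzI : z ∈ Icc (0:ℝ) 1 := ⟨ht.1.trans hz.1.le, hz.2⟩
    have : s t ≤ s z := hmono ht hzI hz.1.le
    simpa [slope_def_field] using div_nonneg (by linarith) (by linarith [hz.1])
  · -- t = 1
    have h0 : (0:ℝ) < t := by rw [h1]; norm_num
    have hsub : Ico 0 t ⊆ Icc (0:ℝ) 1 \ {t} := fun z hz =>
      ⟨⟨hz.1, hz.2.le.trans ht.2⟩, ne_of_lt hz.2⟩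
    have hne : (𝓝[Ico 0 t] t).NeBot := by
      rw [nhdsWithin_Ico_eq_nhdsLT h0]; infer_instance
    have h' := h.mono_left (nhdsWithin_mono t hsub)
    refine ge_of_tendsto h' ?_
    filter_upwards [self_mem_nhdsWithin] with z hz
    have hzI : z ∈ Icc (0:ℝ) 1 := ⟨hz.1, hz.2.le.trans ht.2⟩
    have : s z ≤ s t := hmono hzI ht hz.2.le
    have hzt : z - t < 0 := by linarith [hz.2]
    rw [slope_def_field]
    have := div_nonneg (a := s t - s z) (b := t - z) (by linarith) (by linarith)
    calc (0:ℝ) ≤ (s t - s z) / (t - z) := this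
    _ = (s z - s t) / (z - t) := by rw [div_eq_div_iff (by linarith) (by linarith)]; ring

/-- Change of variables for a monotone differentiable reparametrization, with no
continuity assumption on the integrand beyond it being the composed data. -/
lemma integral_reparam {F : Type*} [NormedAddCommGroup F] [NormedSpace ℝ F]
    (g : ℝ → F) {s s' : ℝ → ℝ}
    (hs : ∀ t ∈ Set.Icc (0:ℝ) 1, HasDerivWithinAt s (s' t) (Set.Icc 0 1) t)
    (hmono : MonotoneOn s (Set.Icc 0 1))
    (hmaps : Set.MapsTo s (Set.Icc (0:ℝ) 1) (Set.Icc (0:ℝ) 1))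
    (hs0 : s 0 = 0) (hs1 : s 1 = 1) :
    ∫ t in Set.Icc (0:ℝ) 1, s' t • g (s t) = ∫ u in Set.Icc (0:ℝ) 1, g u := by
  have hsnn := deriv_nonneg_of_monotoneOn hs hmono
  -- derivWithin within Ici agrees with s' on Ico 0 1
  have hIci : ∀ t ∈ Set.Ico (0:ℝ) 1, derivWithin s (Set.Ici t) t = s' t := by
    intro t ht
    have h1 : HasDerivWithinAt s (s' t) (Icc t 1) t :=
      (hs t (Ico_subset_Icc_self ht)).mono (Icc_subset_Icc ht.1 le_rfl)
    have h2 : HasDerivWithinAt s (s' t) (Ici t) t := by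
      rw [HasDerivWithinAt, hasDerivAtFilter_iff_tendsto] at h1 ⊢
      rwa [nhdsWithin_Icc_eq_nhdsGE ht.2] at h1
    exact h2.derivWithin (uniqueDiffOn_Ici t t self_mem_Ici)
  set A : Set ℝ := Set.Ico (0:ℝ) 1 ∩ {t | derivWithin s (Set.Ici t) t ≠ 0} with hA
  have measA : MeasurableSet A :=
    measurableSet_Ico.inter ((measurable_derivWithin_Ici s) (measurableSet_singleton (0:ℝ)).compl)
  have hAIco : A ⊆ Set.Ico (0:ℝ) 1 := inter_subset_left
  have hAI : A ⊆ Set.Icc (0:ℝ) 1 := hAIco.trans Ico_subset_Icc_self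
  have hA' : ∀ t ∈ A, s' t ≠ 0 := fun t htA => by
    have := htA.2; rwa [mem_setOf_eq, hIci t htA.1] at this
  have hA0 : ∀ t ∈ Set.Ico (0:ℝ) 1, t ∉ A → s' t = 0 := by
    intro t ht htA
    by_contra h
    exact htA ⟨ht, by rw [mem_setOf_eq, hIci t ht]; exact h⟩
  -- injectivity on A
  have hinj : InjOn s A := by
    have key : ∀ x ∈ A, ∀ y ∈ A, x < y → s x ≠ s y := by
      intro x hx y hy hxy heq
      have hconst : ∀ z ∈ Icc x y, s z = s x := by
        intro z hz
        have hzI : z ∈ Icc (0:ℝ) 1 := ⟨(hAI hx).1.trans hz.1, hz.2.trans (hAI hy).2⟩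
        exact le_antisymm (heq ▸ hmono hzI (hAI hy) hz.2) (hmono (hAI hx) hzI hz.1)
      have hd0 : HasDerivWithinAt s 0 (Icc x y) x :=
        (hasDerivWithinAt_const x _ (s x)).congr hconst (hconst x (left_mem_Icc.2 hxy.le))
      have hd1 : HasDerivWithinAt s (s' x) (Icc x y) x :=
        (hs x (hAI hx)).mono (Icc_subset_Icc (hAI hx).1 (hAI hy).2)
      have hu : UniqueDiffWithinAt ℝ (Icc x y) x :=
        (uniqueDiffOn_Icc hxy) x (left_mem_Icc.2 hxy.le)
      have : s' x = 0 := by rw [← hd1.derivWithin hu, hd0.derivWithin hu]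
      exact hA' x hx this
    intro x hx y hy heq
    rcases lt_trichotomy x y with h | h | h
    · exact absurd heq (key x hx y hy h)
    · exact h
    · exact absurd heq.symm (key y hy x hx h)
  -- Jacobian change of variables on A
  have hderA : ∀ x ∈ A, HasDerivWithinAt s (s' x) A x := fun x hx =>
    (hs x (hAI hx)).mono hAI
  have hjac : ∫ u in s '' A, g u = ∫ x in A, |s' x| • g (s x) :=
    integral_image_eq_integral_abs_deriv_smul measA hderA hinj g
  -- the image s '' A fills Icc 0 1 up to measure zero
  have himg : (volume : Measure ℝ) (Icc (0:ℝ) 1 \ s '' A) = 0 := by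
    set B : Set ℝ := Set.Ico (0:ℝ) 1 \ A with hB
    have hBzero : (volume : Measure ℝ) (s '' B) = 0 := by
      have := MeasureTheory.addHaar_image_eq_zero_of_det_fderivWithin_eq_zero
        (μ := (volume : Measure ℝ)) (f := s)
        (f' := fun x => ContinuousLinearMap.smulRight (1 : ℝ →L[ℝ] ℝ) (s' x)) (s := B)
        (fun x hx => ((hs x (Ico_subset_Icc_self hx.1)).mono
          ((diff_subset).trans Ico_subset_Icc_self)).hasFDerivWithinAt)
        (fun x hx => by
          rw [ContinuousLinearMap.smulRight_one_eq_toSpanSingleton, ContinuousLinearMap.det_toSpanSingleton, hA0 x hx.1 hx.2])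
      exact this
    have hIVT : Icc (0:ℝ) 1 ⊆ s '' Icc 0 1 := by
      have hcont : ContinuousOn s (Icc 0 1) := fun t ht => (hs t ht).continuousWithinAt
      have := intermediate_value_Icc (zero_le_one) hcont
      rwa [hs0, hs1] at this
    have hsplit : Icc (0:ℝ) 1 \ s '' A ⊆ s '' B ∪ {s 1} := by
      intro u hu
      obtain ⟨t, htI, hts⟩ := hIVT hu.1
      rcases eq_or_lt_of_le htI.2 with h1 | h1
      · right; rw [← hts, h1]; rfl
      · have htIco : t ∈ Set.Ico (0:ℝ) 1 := ⟨htI.1, h1⟩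
        have htA : t ∉ A := fun hc => hu.2 ⟨t, hc, hts⟩
        exact Or.inl ⟨t, ⟨htIco, htA⟩, hts⟩
    exact measure_mono_null hsplit (le_antisymm
      (le_trans (measure_union_le _ _) (by simp [hBzero])) zero_le) 
  have himset : s '' A =ᵐ[volume] Icc (0:ℝ) 1 := by
    rw [MeasureTheory.ae_eq_set]
    constructor
    · have : s '' A \ Icc 0 1 = ∅ := by
        rw [diff_eq_empty]
        exact (Set.image_mono hAI).trans hmaps.image_subset
      simp [this]
    · exact himg
  -- put things together
  have hleft : ∫ t in Set.Icc (0:ℝ) 1, s' t • g (s t) = ∫ t in A, s' t • g (s t) := by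
    have e1 : ∫ t in Set.Icc (0:ℝ) 1, s' t • g (s t) = ∫ t in Set.Ico (0:ℝ) 1, s' t • g (s t) :=
      setIntegral_congr_set Ico_ae_eq_Icc.symm
    have e2 : ∫ t in Set.Ico (0:ℝ) 1, s' t • g (s t)
        = ∫ t in Set.Ico (0:ℝ) 1, A.indicator (fun t => s' t • g (s t)) t := by
      refine setIntegral_congr_fun measurableSet_Ico fun t ht => ?_
      by_cases htA : t ∈ A
      · rw [indicator_of_mem htA]
      · rw [indicator_of_notMem htA, hA0 t ht htA, zero_smul]
    have e3 : ∫ t in Set.Ico (0:ℝ) 1, A.indicator (fun t => s' t • g (s t)) t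
        = ∫ t in Set.Ico (0:ℝ) 1 ∩ A, s' t • g (s t) := by
      rw [setIntegral_indicator measA]
    rw [e1, e2, e3, inter_eq_self_of_subset_right hAIco]
  have habs : ∫ t in A, s' t • g (s t) = ∫ t in A, |s' t| • g (s t) :=
    setIntegral_congr_fun measA fun t ht => by rw [abs_of_nonneg (hsnn t (hAI ht))]
  rw [hleft, habs, ← hjac, setIntegral_congr_set himset]

noncomputable section

variable {H : Type*} [NormedAddCommGroup H] [InnerProductSpace ℂ H]

/-- The total phase `φ_tot = arg ⟨ψ(0), ψ(1)⟩` of a path `ψ : [0,1] → H`. -/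
def totalPhase (ψ : ℝ → H) : ℝ :=
  Complex.arg (inner ℂ (ψ 0) (ψ 1) : ℂ)

/-- The dynamical phase `φ_dyn = i ∫₀¹ ⟨ψ(t), ψ'(t)⟩ dt` of a path `ψ` with derivative
`ψ'`; it is a real number since `⟨ψ(t), ψ'(t)⟩` is purely imaginary for a unit-norm
path. -/
def dynamicalPhase (ψ ψ' : ℝ → H) : ℝ :=
  (Complex.I * ∫ t in (0:ℝ)..1, (inner ℂ (ψ t) (ψ' t) : ℂ)).re

/-- The geometric phase `φ_geo = φ_tot + φ_dyn` of a path `ψ` with derivative `ψ'`. -/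
def geometricPhase (ψ ψ' : ℝ → H) : ℝ :=
  totalPhase ψ + dynamicalPhase ψ ψ'

/-- the geometric phase of a differentiable path of unit vectors with
`⟨ψ(0), ψ(1)⟩ ≠ 0` is invariant under differentiable monotonically increasing
reparametrizations `s : [0,1] → [0,1]` with `s(0) = 0` and `s(1) = 1`.  (By the chain
rule, the derivative of the reparametrized path `ψ ∘ s` is `t ↦ s'(t) • ψ'(s(t))`.) -/
theorem geometricPhase_reparametrization_invariant
    (ψ ψ' : ℝ → H) (s s' : ℝ → ℝ)
    (hψ : ∀ t ∈ Set.Icc (0:ℝ) 1, HasDerivWithinAt ψ (ψ' t) (Set.Icc 0 1) t)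
    (hunit : ∀ t ∈ Set.Icc (0:ℝ) 1, ‖ψ t‖ = 1)
    (hne : (inner ℂ (ψ 0) (ψ 1) : ℂ) ≠ 0)
    (hs : ∀ t ∈ Set.Icc (0:ℝ) 1, HasDerivWithinAt s (s' t) (Set.Icc 0 1) t)
    (hmono : MonotoneOn s (Set.Icc 0 1))
    (hmaps : Set.MapsTo s (Set.Icc (0:ℝ) 1) (Set.Icc (0:ℝ) 1))
    (hs0 : s 0 = 0) (hs1 : s 1 = 1) :
    geometricPhase (ψ ∘ s) (fun t => s' t • ψ' (s t)) = geometricPhase ψ ψ' := by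
  have hint : ∫ t in (0:ℝ)..1, (inner ℂ ((ψ ∘ s) t) (s' t • ψ' (s t)) : ℂ)
      = ∫ t in (0:ℝ)..1, (inner ℂ (ψ t) (ψ' t) : ℂ) := by
    have heq : ∀ t, (inner ℂ ((ψ ∘ s) t) (s' t • ψ' (s t)) : ℂ)
        = s' t • (fun u => (inner ℂ (ψ u) (ψ' u) : ℂ)) (s t) := by
      intro t
      simp only [Function.comp_apply]
      rw [show s' t • ψ' (s t) = (s' t : ℂ) • ψ' (s t) from
        (RCLike.real_smul_eq_coe_smul (K := ℂ) _ _)]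
      exact inner_smul_real_right _ _ _
    rw [intervalIntegral.integral_of_le zero_le_one,
      intervalIntegral.integral_of_le zero_le_one,
      ← MeasureTheory.integral_Icc_eq_integral_Ioc,
      ← MeasureTheory.integral_Icc_eq_integral_Ioc]
    simp_rw [heq]
    exact integral_reparam (fun u => (inner ℂ (ψ u) (ψ' u) : ℂ)) hs hmono hmaps hs0 hs1
  unfold geometricPhase totalPhase dynamicalPhase
  rw [hint]
  simp [Function.comp_apply, hs0, hs1]

end
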